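/- arXiv:2011.02413 — 6 statements merged into one kernel-verified Lean document; each statement's English description precedes it below -/
import Mathlib

section
/- Let (S, {δ_a}_{a∈ACT}) be a PTS with infinitely many configurations whose branching is bounded by N ≥ 1, i.e., for all s ∈ S and a ∈ ACT the set {s' : δ_a(s,s') ≠ 0} has at most N elements. Then an equivalence relation R on S is a probabilistic bisimulation if and only if for every (p,q) ∈ R and every a ∈ ACT, either δ_a(p) and δ_a(q) are both identically zero, or there exist pairwise distinct configurations u₁,…,u_N ∈ S, pairwise distinct configurations v₁,…,v_N ∈ S, and natural numbers α₁,…,α_N, β₁,…,β_N such that: (i) every s' with δ_a(p,s') ≠ 0 equals some u_i and every s' with δ_a(q,s') ≠ 0 equals some v_i; (ii) writing (w₁,…,w_{2N}) := (u₁,…,u_N,v₁,…,v_N) and (k₁,…,k_{2N}) := (α₁,…,α_N,β₁,…,β_N), for all 1 ≤ i < j ≤ 2N we have (w_i,w_j) ∈ R if and only if k_i = k_j; and (iii) for every k ∈ ℕ, Σ_{i : α_i = k} δ_a(p,u_i) = Σ_{i : β_i = k} δ_a(q,v_i). -/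
/-- A probabilistic transition system (PTS): for each action `a` and configuration `s`,
`δ a s` is a nonnegative rational-valued function with finite support that is either
identically zero or sums to 1. -/
structure PTS (ACT : Type*) (S : Type*) where
  δ : ACT → S → S → ℚ
  nonneg : ∀ a s s', 0 ≤ δ a s s'
  finite_support : ∀ a s, (Function.support (δ a s)).Finite
  total : ∀ a s, (∀ s', δ a s s' = 0) ∨ (∑ᶠ s', δ a s s') = 1

/-- `R` is a probabilistic bisimulation: an equivalence relation such that related
configurations assign the same probability mass to every equivalence class. -/
def PTS.IsBisim {ACT S : Type*} (M : PTS ACT S) (R : S → S → Prop) : Prop :=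
  Equivalence R ∧
    ∀ p q, R p q → ∀ a (c : S),
      (∑ᶠ s' ∈ {s' | R c s'}, M.δ a p s') = (∑ᶠ s' ∈ {s' | R c s'}, M.δ a q s')

lemma aux_sum_via {S : Type*} {N : ℕ} (f : S → ℚ)
    {u : Fin N → S} (hu : Function.Injective u) (hcov : Function.support f ⊆ Set.range u)
    (C : Set S) [DecidablePred (· ∈ C)] [DecidableEq S] :
    (∑ᶠ s' ∈ C, f s') = ∑ i ∈ Finset.univ.filter (fun i => u i ∈ C), f (u i) := by
  set T : Finset (Fin N) := Finset.univ.filter (fun i => u i ∈ C) with hT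
  have h1 : ∑ i ∈ T, f (u i) = ∑ s' ∈ T.image u, f s' :=
    (Finset.sum_image (fun x _ y _ h => hu h)).symm
  have hset : C ∩ Function.support f = (T.image u : Set S) ∩ Function.support f := by
    ext s'
    simp only [Finset.coe_image, Set.mem_inter_iff, Set.mem_image, Finset.mem_coe,
      Finset.mem_filter, hT, Finset.mem_univ, true_and, Function.mem_support]
    constructor
    · rintro ⟨hC, hf⟩
      obtain ⟨i, rfl⟩ := hcov hf
      exact ⟨⟨i, hC, rfl⟩, hf⟩
    · rintro ⟨⟨i, hiC, rfl⟩, hf⟩; exact ⟨hiC, hf⟩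
  rw [h1, ← finsum_mem_coe_finset, ← finsum_mem_inter_support f C,
    ← finsum_mem_inter_support f (T.image u : Set S), hset]

lemma aux_exists_cover {S : Type*} [Infinite S] {N : ℕ} {T : Set S} (hT : T.Finite)
    (hcard : T.ncard ≤ N) :
    ∃ u : Fin N → S, Function.Injective u ∧ T ⊆ Set.range u := by
  classical
  obtain ⟨t, hsub, hcardt⟩ := Infinite.exists_superset_card_eq hT.toFinset N
    (by rwa [Set.ncard_eq_toFinset_card T hT] at hcard)
  let e := Finset.equivFinOfCardEq hcardt
  refine ⟨fun i => ((e.symm i : t) : S), fun i j h => e.symm.injective (Subtype.coe_injective h),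
    fun s hs => ?_⟩
  have hst : s ∈ t := hsub (hT.mem_toFinset.mpr hs)
  exact ⟨e ⟨s, hst⟩, by simp⟩

lemma aux_mem_zero {S : Type*} (f : S → ℚ) (hf : (Function.support f).Finite)
    (hpos : ∀ s, 0 ≤ f s) {C : Set S} (h : (∑ᶠ s' ∈ C, f s') = 0) {s0 : S} (hs0 : s0 ∈ C) :
    f s0 = 0 := by
  classical
  by_contra hne
  have hfin : (C ∩ Function.support f).Finite := hf.subset (by intro x hx; exact hx.2)
  rw [← finsum_mem_inter_support f C, finsum_mem_eq_finite_toFinset_sum f hfin] at h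
  have hmem : s0 ∈ hfin.toFinset := hfin.mem_toFinset.mpr ⟨hs0, hne⟩
  exact hne ((Finset.sum_eq_zero_iff_of_nonneg (fun i _ => hpos i)).mp h s0 hmem)

lemma aux_label {S I : Type*} {R : S → S → Prop} (hR : Equivalence R) (w : I → S)
    (idx : I → ℕ) (hidx : Function.Injective idx) :
    ∃ lab : I → ℕ, ∀ i j, (R (w i) (w j) ↔ lab i = lab j) := by
  refine ⟨fun i => sInf {n | ∃ j, idx j = n ∧ R (w j) (w i)}, fun i j => ⟨?_, ?_⟩⟩
  · intro h
    have hss : {n | ∃ j', idx j' = n ∧ R (w j') (w i)}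
        = {n | ∃ j', idx j' = n ∧ R (w j') (w j)} := by
      ext n
      constructor <;> rintro ⟨j', rfl, h'⟩
      · exact ⟨j', rfl, hR.trans h' h⟩
      · exact ⟨j', rfl, hR.trans h' (hR.symm h)⟩
    simp only [hss]
  · intro h
    have hne : ∀ k : I, {n | ∃ j', idx j' = n ∧ R (w j') (w k)}.Nonempty :=
      fun k => ⟨idx k, k, rfl, hR.refl _⟩
    obtain ⟨j1, hj1, hRj1⟩ := Nat.sInf_mem (hne i)
    obtain ⟨j2, hj2, hRj2⟩ := Nat.sInf_mem (hne j)
    simp only [] at h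
    have hjj : j1 = j2 := hidx (by rw [hj1, hj2]; exact h)
    exact hR.trans (hR.symm hRj1) (hjj ▸ hRj2)

theorem stmt0 {ACT S : Type*} [Infinite S] (M : PTS ACT S) (N : ℕ) (hN : 1 ≤ N)
    (hbound : ∀ a s, (Function.support (M.δ a s)).ncard ≤ N)
    (R : S → S → Prop) (hR : Equivalence R) :
    M.IsBisim R ↔
      ∀ p q, R p q → ∀ a,
        ((∀ s', M.δ a p s' = 0) ∧ (∀ s', M.δ a q s' = 0)) ∨
        ∃ (u v : Fin N → S) (α β : Fin N → ℕ),
          Function.Injective u ∧ Function.Injective v ∧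
          (∀ s', M.δ a p s' ≠ 0 → ∃ i, s' = u i) ∧
          (∀ s', M.δ a q s' ≠ 0 → ∃ i, s' = v i) ∧
          (∀ i j : Fin N ⊕ Fin N, i ≠ j →
            (R (Sum.elim u v i) (Sum.elim u v j) ↔ Sum.elim α β i = Sum.elim α β j)) ∧
          (∀ k : ℕ,
            (∑ i ∈ Finset.univ.filter (fun i => α i = k), M.δ a p (u i)) =
            (∑ i ∈ Finset.univ.filter (fun i => β i = k), M.δ a q (v i))) := by
  classical
  constructor
  · rintro ⟨-, hbis⟩ p q hpq a
    by_cases hp : ∀ s', M.δ a p s' = 0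
    · left
      refine ⟨hp, fun s' => ?_⟩
      refine aux_mem_zero (M.δ a q) (M.finite_support a q) (M.nonneg a q)
        ((hbis p q hpq a s').symm.trans (finsum_mem_of_eqOn_zero (fun x _ => hp x))) (hR.refl s')
    · right
      obtain ⟨u, hu, hucov⟩ := aux_exists_cover (M.finite_support a p) (hbound a p)
      obtain ⟨v, hv, hvcov⟩ := aux_exists_cover (M.finite_support a q) (hbound a q)
      have hidx : Function.Injective
          (Sum.elim (fun i : Fin N => (i : ℕ)) (fun j : Fin N => N + (j : ℕ))) := by
        rintro (i | i) (j | j) h <;> simp only [Sum.elim_inl, Sum.elim_inr] at h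
        · exact congrArg Sum.inl (Fin.ext h)
        · exact absurd h (by have := i.isLt; omega)
        · exact absurd h (by have := j.isLt; omega)
        · exact congrArg Sum.inr (Fin.ext (by omega))
      obtain ⟨lab, hlab⟩ := aux_label hR (Sum.elim u v) _ hidx
      refine ⟨u, v, fun i => lab (.inl i), fun j => lab (.inr j), hu, hv, ?_, ?_, ?_, ?_⟩
      · intro s' hs'
        obtain ⟨i, hi⟩ := hucov hs'
        exact ⟨i, hi.symm⟩
      · intro s' hs'
        obtain ⟨i, hi⟩ := hvcov hs'
        exact ⟨i, hi.symm⟩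
      · intro i j _
        have he : ∀ x : Fin N ⊕ Fin N,
            Sum.elim (fun i => lab (Sum.inl i)) (fun j => lab (Sum.inr j)) x = lab x := by
          rintro (x | x) <;> rfl
        rw [he i, he j]
        exact hlab i j
      · intro k
        by_cases hk : ∃ i0, lab i0 = k
        · obtain ⟨i0, hi0⟩ := hk
          have hC := hbis p q hpq a (Sum.elim u v i0)
          rw [aux_sum_via (M.δ a p) hu hucov {s' | R (Sum.elim u v i0) s'},
              aux_sum_via (M.δ a q) hv hvcov {s' | R (Sum.elim u v i0) s'}] at hC
          have e1 : (Finset.univ.filter (fun i => u i ∈ {s' | R (Sum.elim u v i0) s'}))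
              = Finset.univ.filter (fun i => lab (Sum.inl i) = k) := by
            ext i
            simp only [Finset.mem_filter, Finset.mem_univ, true_and, Set.mem_setOf_eq]
            rw [← hi0]
            exact (hlab i0 (.inl i)).trans eq_comm
          have e2 : (Finset.univ.filter (fun i => v i ∈ {s' | R (Sum.elim u v i0) s'}))
              = Finset.univ.filter (fun i => lab (Sum.inr i) = k) := by
            ext i
            simp only [Finset.mem_filter, Finset.mem_univ, true_and, Set.mem_setOf_eq]
            rw [← hi0]
            exact (hlab i0 (.inr i)).trans eq_comm
          rw [e1, e2] at hC
          exact hC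
        · push_neg at hk
          have e1 : (Finset.univ.filter (fun i : Fin N => lab (Sum.inl i) = k)) = ∅ := by
            ext i; simp [hk]
          have e2 : (Finset.univ.filter (fun i : Fin N => lab (Sum.inr i) = k)) = ∅ := by
            ext i; simp [hk]
          rw [e1, e2]
          simp
  · intro h
    refine ⟨hR, fun p q hpq a c => ?_⟩
    rcases h p q hpq a with ⟨hp, hq⟩ | ⟨u, v, α, β, hu, hv, hucov, hvcov, hlab, hsum⟩
    · simp only [hp, hq]
    · have hucov' : Function.support (M.δ a p) ⊆ Set.range u := by
        intro s' hs'
        obtain ⟨i, hi⟩ := hucov s' hs'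
        exact ⟨i, hi.symm⟩
      have hvcov' : Function.support (M.δ a q) ⊆ Set.range v := by
        intro s' hs'
        obtain ⟨i, hi⟩ := hvcov s' hs'
        exact ⟨i, hi.symm⟩
      rw [aux_sum_via (M.δ a p) hu hucov' {s' | R c s'},
          aux_sum_via (M.δ a q) hv hvcov' {s' | R c s'}]
      have memu : ∀ i0 i : Fin N, u i0 ∈ {s' | R c s'} →
          (u i ∈ {s' | R c s'} ↔ α i = α i0) := by
        intro i0 i hi0
        rcases eq_or_ne i i0 with rfl | hne
        · simp [hi0]
        · have := hlab (.inl i0) (.inl i) (by simp [hne.symm])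
          simp only [Sum.elim_inl] at this
          constructor
          · intro hi
            exact ((this.mp (hR.trans (hR.symm hi0) hi))).symm
          · intro he
            exact hR.trans hi0 (this.mpr he.symm)
      have memuv : ∀ (i0 i : Fin N), u i0 ∈ {s' | R c s'} →
          (v i ∈ {s' | R c s'} ↔ β i = α i0) := by
        intro i0 i hi0
        have := hlab (.inl i0) (.inr i) (by simp)
        simp only [Sum.elim_inl, Sum.elim_inr] at this
        constructor
        · intro hi
          exact ((this.mp (hR.trans (hR.symm hi0) hi))).symm
        · intro he
          exact hR.trans hi0 (this.mpr he.symm)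
      have memv : ∀ i0 i : Fin N, v i0 ∈ {s' | R c s'} →
          (v i ∈ {s' | R c s'} ↔ β i = β i0) := by
        intro i0 i hi0
        rcases eq_or_ne i i0 with rfl | hne
        · simp [hi0]
        · have := hlab (.inr i0) (.inr i) (by simp [hne.symm])
          simp only [Sum.elim_inr] at this
          constructor
          · intro hi
            exact ((this.mp (hR.trans (hR.symm hi0) hi))).symm
          · intro he
            exact hR.trans hi0 (this.mpr he.symm)
      by_cases hC1 : ∃ i0, u i0 ∈ {s' | R c s'}
      · obtain ⟨i0, hi0⟩ := hC1
        have e1 : (Finset.univ.filter (fun i => u i ∈ {s' | R c s'}))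
            = Finset.univ.filter (fun i => α i = α i0) := by
          ext i
          simp only [Finset.mem_filter, Finset.mem_univ, true_and]
          exact memu i0 i hi0
        have e2 : (Finset.univ.filter (fun i => v i ∈ {s' | R c s'}))
            = Finset.univ.filter (fun i => β i = α i0) := by
          ext i
          simp only [Finset.mem_filter, Finset.mem_univ, true_and]
          exact memuv i0 i hi0
        rw [e1, e2]
        exact hsum (α i0)
      · push_neg at hC1
        by_cases hC2 : ∃ j0, v j0 ∈ {s' | R c s'}
        · obtain ⟨j0, hj0⟩ := hC2
          have e1 : (Finset.univ.filter (fun i => u i ∈ {s' | R c s'}))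
              = (∅ : Finset (Fin N)) := by
            ext i
            simp only [Finset.mem_filter, Finset.mem_univ, true_and, Finset.notMem_empty,
              iff_false]
            exact hC1 i
          have e1' : (Finset.univ.filter (fun i : Fin N => α i = β j0))
              = (∅ : Finset (Fin N)) := by
            ext i
            simp only [Finset.mem_filter, Finset.mem_univ, true_and, Finset.notMem_empty,
              iff_false]
            intro he
            have := hlab (.inl i) (.inr j0) (by simp)
            simp only [Sum.elim_inl, Sum.elim_inr] at this
            exact hC1 i (hR.trans hj0 (hR.symm (this.mpr he)))
          have e2 : (Finset.univ.filter (fun i => v i ∈ {s' | R c s'}))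
              = Finset.univ.filter (fun i => β i = β j0) := by
            ext i
            simp only [Finset.mem_filter, Finset.mem_univ, true_and]
            exact memv j0 i hj0
          rw [e1, e2, ← hsum (β j0), e1']
        · push_neg at hC2
          have e1 : (Finset.univ.filter (fun i => u i ∈ {s' | R c s'}))
              = (∅ : Finset (Fin N)) := by
            ext i
            simp only [Finset.mem_filter, Finset.mem_univ, true_and, Finset.notMem_empty,
              iff_false]
            exact hC1 i
          have e2 : (Finset.univ.filter (fun i => v i ∈ {s' | R c s'}))
              = (∅ : Finset (Fin N)) := by
            ext i
            simp only [Finset.mem_filter, Finset.mem_univ, true_and, Finset.notMem_empty,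
              iff_false]
            exact hC2 i
          rw [e1, e2]
          simp
end

section
/- Let (S, {δ_a}_{a∈ACT}) be a PTS over a finite action set ACT and let f be an external adversary. If u, v ∈ S are probabilistic bisimilar (u ~ v), then Pr_f^u(t) = Pr_f^v(t) for every finite trace t ∈ ACT*, i.e., probabilistic bisimilar configurations induce the same trace distribution under every external adversary. -/
/-- An external adversary: a nonnegative probability distribution over actions for
each observed trace (history). -/
def IsAdversary {ACT : Type*} [Fintype ACT] (f : List ACT → ACT → ℚ) : Prop :=
  ∀ h, (∀ a, 0 ≤ f h a) ∧ (∑ a, f h a) = 1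

/-- `traceProb M f s h t` is the probability `P(s,h,t)`:
`P(s,h,ε) = 1` and `P(s,h,a·t) = f(h)(a) · Σ_{s'} δ_a(s,s') · P(s',h·a,t)`.
The trace probability `Pr_f^s(t)` is `traceProb M f s [] t`. -/
noncomputable def traceProb {ACT S : Type*} (M : PTS ACT S)
    (f : List ACT → ACT → ℚ) : S → List ACT → List ACT → ℚ
  | _, _, [] => 1
  | s, h, a :: t => f h a * ∑ᶠ s', M.δ a s s' * traceProb M f s' (h ++ [a]) t

open Function in
lemma key {ACT S : Type*} (M : PTS ACT S) (R : S → S → Prop) (hR : M.IsBisim R)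
    (a : ACT) (u v : S) (huv : R u v) (g : S → ℚ)
    (hg : ∀ p q, R p q → g p = g q) :
    ∑ᶠ s', M.δ a u s' * g s' = ∑ᶠ s', M.δ a v s' * g s' := by
  classical
  letI st : Setoid S := ⟨R, hR.1⟩
  let π : S → Quotient st := Quotient.mk''
  have hπ : ∀ x y : S, π x = π y ↔ R x y := fun x y => Quotient.eq''
  let F : Finset S := (M.finite_support a u).toFinset ∪ (M.finite_support a v).toFinset
  have hsub : ∀ w : S, w = u ∨ w = v → support (M.δ a w) ⊆ F := by
    rintro w (rfl | rfl) x hx <;> simp [F, hx]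
  have hmain : ∀ w : S, w = u ∨ w = v →
      ∑ᶠ s', M.δ a w s' * g s' =
        ∑ q ∈ F.image π, g q.out * ∑ᶠ s' ∈ {s' | R q.out s'}, M.δ a w s' := by
    intro w hw
    have h1 : support (fun s' => M.δ a w s' * g s') ⊆ (F : Set S) := by
      intro x hx
      exact hsub w hw (fun h0 => hx (by simp [h0]))
    rw [finsum_eq_sum_of_support_subset _ h1]
    rw [← Finset.sum_fiberwise_of_maps_to (g := π) (t := F.image π)
      (fun x hx => Finset.mem_image_of_mem π hx)]
    refine Finset.sum_congr rfl fun q hq => ?_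
    have hclass : ∀ x, π x = q ↔ R q.out x := by
      intro x
      constructor
      · intro h
        exact hR.1.symm ((hπ x q.out).1 (h.trans (Quotient.out_eq' q).symm))
      · intro h
        exact ((hπ x q.out).2 (hR.1.symm h)).trans (Quotient.out_eq' q)
    have hg' : ∀ x ∈ F.filter (fun x => π x = q), g x = g q.out := by
      intro x hx
      exact (hg _ _ ((hclass x).1 (Finset.mem_filter.1 hx).2)).symm
    calc ∑ x ∈ F.filter (fun x => π x = q), M.δ a w x * g x
        = ∑ x ∈ F.filter (fun x => π x = q), M.δ a w x * g q.out :=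
          Finset.sum_congr rfl fun x hx => by rw [hg' x hx]
      _ = (∑ x ∈ F.filter (fun x => π x = q), M.δ a w x) * g q.out := by
          rw [Finset.sum_mul]
      _ = g q.out * ∑ᶠ s' ∈ {s' | R q.out s'}, M.δ a w s' := by
          rw [mul_comm]
          congr 1
          rw [finsum_mem_eq_sum_of_inter_support_eq]
          ext x
          simp only [Set.mem_inter_iff, Set.mem_setOf_eq, Finset.coe_filter,
            Set.mem_setOf_eq, mem_support]
          constructor
          · rintro ⟨hrx, hx⟩
            exact ⟨⟨hsub w hw hx, (hclass x).2 hrx⟩, hx⟩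
          · rintro ⟨⟨_, hqx⟩, hx⟩
            exact ⟨(hclass x).1 hqx, hx⟩
  rw [hmain u (Or.inl rfl), hmain v (Or.inr rfl)]
  exact Finset.sum_congr rfl fun q _ => by rw [hR.2 u v huv a q.out]

theorem stmt1 {ACT S : Type*} [Fintype ACT] (M : PTS ACT S)
    (f : List ACT → ACT → ℚ) (hf : IsAdversary f)
    (u v : S) (huv : ∃ R, M.IsBisim R ∧ R u v) :
    ∀ t : List ACT, traceProb M f u [] t = traceProb M f v [] t := by
  obtain ⟨R, hR, huv⟩ := huv
  have main : ∀ (t : List ACT) (h : List ACT) (p q : S), R p q →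
      traceProb M f p h t = traceProb M f q h t := by
    intro t
    induction t with
    | nil => intro h p q _; rfl
    | cons a t ih =>
      intro h p q hpq
      simp only [traceProb]
      congr 1
      exact key M R hR a p q hpq _ (fun p' q' h' => ih _ p' q' h')
  exact fun t => main t [] u v huv
end

section
/- Let n ≥ 1 and let x, b : ZMod n → Bool be assignments of secret bits and shared random bits to the n participants of the dining cryptographers protocol. Define the announcements a : ZMod n → Bool by a(i) := x(i) XOR b(i) XOR b(i−1). Then the XOR of all announcements equals the XOR of all secrets: ⨁_{i ∈ ZMod n} a(i) = ⨁_{i ∈ ZMod n} x(i). -/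
instance : Std.Commutative (α := Bool) xor := ⟨Bool.xor_comm⟩
instance : Std.Associative (α := Bool) xor := ⟨Bool.xor_assoc⟩

/-- XOR of a Boolean-valued function over all indices in `ZMod n`. -/
def bigXor (n : ℕ) [NeZero n] (f : ZMod n → Bool) : Bool :=
  Finset.univ.fold xor false f

lemma bigXor_distrib (n : ℕ) [NeZero n] (f g : ZMod n → Bool) :
    bigXor n (fun i => xor (f i) (g i)) = xor (bigXor n f) (bigXor n g) := by
  simpa [bigXor] using
    (Finset.fold_op_distrib (op := xor) (s := (Finset.univ : Finset (ZMod n)))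
      (f := f) (g := g) (b₁ := false) (b₂ := false))

lemma bigXor_reindex (n : ℕ) [NeZero n] (f : ZMod n → Bool) :
    bigXor n (fun i => f (i - 1)) = bigXor n f := by
  unfold bigXor
  have : (Finset.univ : Finset (ZMod n)) =
      Finset.univ.map (Equiv.subRight (1 : ZMod n)).toEmbedding := by
    simp
  conv_rhs => rw [this, Finset.fold_map]
  rfl

/-- In the dining cryptographers protocol, the XOR of the announcements
`a i = x i ⊕ b i ⊕ b (i-1)` equals the XOR of the secrets. -/
theorem stmt10 (n : ℕ) (hn : 1 ≤ n) [NeZero n] (x b : ZMod n → Bool) :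
    bigXor n (fun i => xor (x i) (xor (b i) (b (i - 1)))) = bigXor n x := by
  rw [bigXor_distrib n x (fun i => xor (b i) (b (i - 1))),
    bigXor_distrib n b (fun i => b (i - 1)), bigXor_reindex n b]
  simp [Bool.xor_self]
end

section
/- Let n ≥ 3, fix secrets x : ZMod n → Bool and bits β, β' ∈ Bool. Consider the map Φ sending each b : ZMod n → Bool with b(0) = β and b(n−1) = β' to the announcement vector a : ZMod n → Bool defined by a(i) := x(i) XOR b(i) XOR b(i−1). Then Φ is injective and its image is exactly the set A := {a : ZMod n → Bool | ⨁_i a(i) = ⨁_i x(i) and a(0) = x(0) XOR β XOR β'}; consequently |A| = 2^{n−2} and, when the bits b(1),…,b(n−2) are chosen independently and uniformly at random, the announcement vector is uniformly distributed over A. -/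
theorem bigXor_eq_sum (n : ℕ) [NeZero n] (f : ZMod n → Bool) : bigXor n f = ∑ i, f i := rfl

theorem Nat.card_subtype_forall_mem_apply_eq {ι Y : Type*} [Fintype ι] [DecidableEq ι]
    (s : Finset ι) (w : ι → Y) :
    Nat.card {f : ι → Y // ∀ i ∈ s, f i = w i} = Nat.card Y ^ (Fintype.card ι - s.card) := by
  let e : {f : ι → Y // ∀ i ∈ s, f i = w i} ≃ ({i // i ∉ s} → Y) :=
    { toFun := fun f i => f.1 i
      invFun := fun g => ⟨fun i => if h : i ∈ s then w i else g ⟨i, h⟩, fun i hi => dif_pos hi⟩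
      left_inv := fun f => Subtype.ext <| funext fun i => by
        by_cases h : i ∈ s <;> simp [h, f.2 i]
      right_inv := fun g => funext fun i => dif_neg i.2 }
  rw [Nat.card_congr e, Nat.card_fun, Nat.card_eq_fintype_card (α := {i // i ∉ s}),
    Fintype.card_subtype_compl, Fintype.card_coe]

theorem Nat.card_fiber_eq_one_of_injective {α β : Type*} {f : α → β} (hf : Function.Injective f)
    {y : β} (hy : y ∈ Set.range f) : Nat.card {x // f x = y} = 1 :=
  have ⟨x, hx⟩ := hy
  Nat.card_eq_one_iff_unique.2 ⟨⟨fun u v => Subtype.ext (hf (u.2.trans v.2.symm))⟩, ⟨⟨x, hx⟩⟩⟩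

namespace ZMod

variable {n : ℕ} [NeZero n] {G : Type*} [AddCommGroup G]

theorem sum_eq_sum_range (g : ZMod n → G) : ∑ i, g i = ∑ k ∈ Finset.range n, g k :=
  Finset.sum_nbij' val (fun k => k) (fun i _ => Finset.mem_range.2 (val_lt i))
    (fun _ _ => Finset.mem_univ _) (fun i _ => natCast_zmod_val i)
    (fun _ hk => val_cast_of_lt (Finset.mem_range.1 hk)) (fun i _ => by rw [natCast_zmod_val])

theorem card_subtype_apply_zero_eq_apply_neg_one_eq [Fact (1 < n)] {Y : Type*} (y y' : Y) :
    Nat.card {b : ZMod n → Y // b 0 = y ∧ b (-1) = y'} = Nat.card Y ^ (n - 2) := by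
  have hne : (-1 : ZMod n) ≠ 0 := neg_ne_zero.2 one_ne_zero
  let w : ZMod n → Y := fun i => if i = 0 then y else y'
  have e : {b : ZMod n → Y // b 0 = y ∧ b (-1) = y'} ≃
      {b : ZMod n → Y // ∀ i ∈ ({0, -1} : Finset (ZMod n)), b i = w i} :=
    Equiv.subtypeEquivRight fun b => by simp [w, hne]
  rw [Nat.card_congr e, Nat.card_subtype_forall_mem_apply_eq, card, Finset.card_pair hne.symm]

theorem sum_sub_apply_sub_one (b : ZMod n → G) : ∑ i, (b i - b (i - 1)) = 0 := by
  rw [Finset.sum_sub_distrib, sub_eq_zero]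
  exact (Fintype.sum_equiv (Equiv.subRight 1) _ _ fun _ => rfl).symm

theorem apply_eq_apply_zero_of_forall_apply_sub_one {α : Type*} {f : ZMod n → α}
    (h : ∀ i, f i = f (i - 1)) (i : ZMod n) : f i = f 0 := by
  have hnat : ∀ k : ℕ, f k = f 0 := by
    intro k
    induction k with
    | zero => simp
    | succ k ih => rw [h, Nat.cast_succ, add_sub_cancel_right, ih]
  rw [← natCast_zmod_val i, hnat]

theorem eq_of_sub_apply_sub_one_eq {b b' : ZMod n → G} (h0 : b 0 = b' 0)
    (h : ∀ i, b i - b (i - 1) = b' i - b' (i - 1)) : b = b' := by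
  funext i
  have hshift : ∀ j, (b - b') j = (b - b') (j - 1) := fun j =>
    sub_eq_sub_iff_sub_eq_sub.1 (h j)
  have := apply_eq_apply_zero_of_forall_apply_sub_one hshift i
  rwa [Pi.sub_apply, Pi.sub_apply, h0, sub_self, sub_eq_zero] at this

theorem exists_sub_apply_sub_one_eq {g : ZMod n → G} (hg : ∑ i, g i = 0) (β : G) :
    ∃ b : ZMod n → G, b 0 = β ∧ ∀ i, b i - b (i - 1) = g i := by
  let b : ZMod n → G := fun i => β + ∑ k ∈ Finset.range i.val, g (k + 1)
  have step : ∀ k < n, b (k + 1) - b k = g (k + 1) := by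
    intro k hk
    have hbk : b k = β + ∑ j ∈ Finset.range k, g (j + 1) := by
      simp only [b, val_cast_of_lt hk]
    rcases (show k + 1 ≤ n from hk).lt_or_eq with hlt | heq
    · have hval : ((k : ZMod n) + 1).val = k + 1 := by
        rw [← Nat.cast_add_one, val_cast_of_lt hlt]
      simp only [b, hval, hbk, Finset.sum_range_succ]
      abel
    -- at `k = n - 1` the step wraps around to `b 0`, and `hg` supplies the missing term `g 0`
    · have hwrap : (k : ZMod n) + 1 = 0 := by rw [← Nat.cast_add_one, heq, natCast_self]
      have htotal : ∑ j ∈ Finset.range (k + 1), g j = 0 := by rw [heq, ← sum_eq_sum_range, hg]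
      rw [Finset.sum_range_succ'] at htotal
      simp only [Nat.cast_succ, Nat.cast_zero] at htotal
      rw [hwrap, hbk]
      simp only [b, val_zero, Finset.range_zero, Finset.sum_empty, add_zero]
      rw [eq_neg_of_add_eq_zero_right htotal]
      abel
  refine ⟨b, by simp [b], fun i => ?_⟩
  simpa [natCast_zmod_val] using step (i - 1).val (val_lt _)

end ZMod

section Announcement

variable {n : ℕ} {G : Type*} [AddCommGroup G]

def announcement (x b : ZMod n → G) : ZMod n → G := fun i => x i + (b i - b (i - 1))

theorem announcement_apply_zero (x b : ZMod n → G) :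
    announcement x b 0 = x 0 + (b 0 - b (-1)) := by
  rw [announcement, zero_sub]

theorem sum_announcement [NeZero n] (x b : ZMod n → G) :
    ∑ i, announcement x b i = ∑ i, x i := by
  simp only [announcement, Finset.sum_add_distrib, ZMod.sum_sub_apply_sub_one, add_zero]

theorem eq_of_announcement_eq [NeZero n] {x b b' : ZMod n → G} (h0 : b 0 = b' 0)
    (h : announcement x b = announcement x b') : b = b' :=
  ZMod.eq_of_sub_apply_sub_one_eq h0 fun i => add_left_cancel (congrFun h i)

theorem exists_announcement_eq [NeZero n] {x a : ZMod n → G} (hsum : ∑ i, a i = ∑ i, x i)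
    (β : G) :
    ∃ b : ZMod n → G, b 0 = β ∧ announcement x b = a := by
  obtain ⟨b, hb0, hb⟩ := ZMod.exists_sub_apply_sub_one_eq (g := fun i => a i - x i)
    (by rw [Finset.sum_sub_distrib, hsum, sub_self]) β
  exact ⟨b, hb0, funext fun i => by rw [announcement, hb, add_sub_cancel]⟩

end Announcement

/-- Anonymity core of the dining cryptographers protocol: fixing the secrets `x`
and the two random bits `β = b 0`, `β' = b (n-1)` observed by the first
participant, the map `Φ` from the remaining randomness to the announcement
vector `a i = x i ⊕ b i ⊕ b (i-1)` is injective with image exactly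
`A = {a | ⊕ᵢ a i = ⊕ᵢ x i ∧ a 0 = x 0 ⊕ β ⊕ β'}`; hence `|A| = 2 ^ (n-2)` and
(choosing the remaining bits uniformly at random) the announcement vector is
uniformly distributed over `A`, all fibers of `Φ` over `A` having equal size. -/
theorem stmt11 (n : ℕ) (hn : 3 ≤ n) [NeZero n] (x : ZMod n → Bool) (β β' : Bool) :
    let D := {b : ZMod n → Bool // b 0 = β ∧ b ((n - 1 : ℕ) : ZMod n) = β'}
    let Φ : D → (ZMod n → Bool) := fun b i => xor (x i) (xor (b.1 i) (b.1 (i - 1)))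
    let A : Set (ZMod n → Bool) :=
      {a | bigXor n a = bigXor n x ∧ a 0 = xor (x 0) (xor β β')}
    Function.Injective Φ ∧
      Set.range Φ = A ∧
      Nat.card A = 2 ^ (n - 2) ∧
      ∀ a₁ ∈ A, ∀ a₂ ∈ A,
        Nat.card {b : D // Φ b = a₁} = Nat.card {b : D // Φ b = a₂} := by
  intro D Φ A
  have : Fact (1 < n) := ⟨by omega⟩
  have hlast : ((n - 1 : ℕ) : ZMod n) = -1 := by
    rw [Nat.cast_sub (by omega), Nat.cast_one, ZMod.natCast_self, zero_sub]
  -- on `Bool`, both `+` and `-` are `xor`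
  have hΦ : ∀ b : D, Φ b = announcement x b.1 := fun _ => rfl
  have hinj : Function.Injective Φ := fun b b' h =>
    Subtype.ext (eq_of_announcement_eq (b.2.1.trans b'.2.1.symm) h)
  have hrange : Set.range Φ = A := by
    ext a
    constructor
    · rintro ⟨b, rfl⟩
      refine ⟨sum_announcement x b.1, ?_⟩
      rw [hΦ, announcement_apply_zero, b.2.1, ← hlast, b.2.2]
      rfl
    · rintro ⟨hsum, h0 : a 0 = x 0 + (β - β')⟩
      obtain ⟨b, hb0, rfl⟩ := exists_announcement_eq hsum β
      rw [announcement_apply_zero, hb0, add_right_inj, sub_right_inj] at h0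
      exact ⟨⟨b, hb0, hlast ▸ h0⟩, rfl⟩
  have hcardD : Nat.card D = 2 ^ (n - 2) := by
    simp only [D, hlast]
    rw [ZMod.card_subtype_apply_zero_eq_apply_neg_one_eq, Nat.card_eq_fintype_card,
      Fintype.card_bool]
  have hfiber : ∀ a ∈ A, Nat.card {b : D // Φ b = a} = 1 := fun a ha =>
    Nat.card_fiber_eq_one_of_injective hinj (hrange ▸ ha)
  refine ⟨hinj, hrange, ?_, fun a₁ h₁ a₂ h₂ => by rw [hfiber a₁ h₁, hfiber a₂ h₂]⟩
  rw [← hrange, Nat.card_range_of_injective hinj, hcardD]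
end

section
/- Let n ≥ 1, g ≥ 1, and M be such that (g−1)·n < M. Let x : ZMod n → ℕ satisfy x(i) ≤ g−1 for every i, and let y : ZMod n → ZMod M be arbitrary. Define the announcements a : ZMod n → ZMod M by a(i) := (x(i) mod M) + y(i) − y(i−1). Then the canonical representative of Σ_{i} a(i) in {0,…,M−1} equals the natural-number sum Σ_{i} x(i); i.e., the participants recover the exact sum of the secrets from the announcements. -/
/-- Correctness of the grades protocol: if every secret satisfies `x i ≤ g - 1`
and `(g-1)·n < M`, then the canonical representative in `{0,…,M-1}` of the sum
of the announcements `a i = x i + y i - y (i-1)` (in `ZMod M`) equals the exact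
natural-number sum of the secrets. -/
theorem stmt13 (n g M : ℕ) (hn : 1 ≤ n) (hg : 1 ≤ g) (hM : (g - 1) * n < M)
    [NeZero n] (x : ZMod n → ℕ) (hx : ∀ i, x i ≤ g - 1)
    (y : ZMod n → ZMod M) :
    (∑ i : ZMod n, (((x i : ZMod M)) + y i - y (i - 1))).val =
      ∑ i : ZMod n, x i := by
  haveI : NeZero M := ⟨by omega⟩
  have hshift : ∑ i : ZMod n, y (i - 1) = ∑ i : ZMod n, y i :=
    Fintype.sum_equiv (Equiv.subRight (1 : ZMod n)) _ _ (fun i => rfl)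
  have h1 : ∑ i : ZMod n, ((x i : ZMod M) + y i - y (i - 1))
      = ((∑ i : ZMod n, x i : ℕ) : ZMod M) := by
    push_cast
    rw [Finset.sum_sub_distrib, Finset.sum_add_distrib, hshift]
    ring
  rw [h1, ZMod.val_natCast_of_lt]
  calc ∑ i : ZMod n, x i ≤ ∑ _i : ZMod n, (g - 1) :=
        Finset.sum_le_sum (fun i _ => hx i)
    _ = (g - 1) * n := by
        simp [Finset.sum_const, Finset.card_univ, ZMod.card, mul_comm]
    _ < M := hM
end

section
/- Let n ≥ 3 and M ≥ 1, fix secrets x : ZMod n → ZMod M and values γ, γ' ∈ ZMod M. Consider the map Ψ sending each y : ZMod n → ZMod M with y(0) = γ and y(n−1) = γ' to the announcement vector a : ZMod n → ZMod M defined by a(i) := x(i) + y(i) − y(i−1). Then Ψ is injective and its image is exactly the set A := {a : ZMod n → ZMod M | Σ_i a(i) = Σ_i x(i) and a(0) = x(0) + γ − γ'}; consequently |A| = M^{n−2} and, when y(1),…,y(n−2) are chosen independently and uniformly at random, the announcement vector is uniformly distributed over A. -/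
section Aux

set_option linter.unusedSectionVars false

variable {n M : ℕ} [NeZero n] [NeZero M]

lemma sum_zmod_eq (f : ZMod n → ZMod M) :
    (∑ i : ZMod n, f i) = ∑ k ∈ Finset.range n, f (k : ZMod n) := by
  refine Finset.sum_nbij' (fun i => i.val) (fun k => (k : ZMod n)) ?_ ?_ ?_ ?_ ?_
  · intro i _; exact Finset.mem_range.mpr (ZMod.val_lt i)
  · intro k _; exact Finset.mem_univ _
  · intro i _; exact ZMod.natCast_zmod_val i
  · intro k hk; exact ZMod.val_cast_of_lt (Finset.mem_range.mp hk)
  · intro i _; rw [ZMod.natCast_zmod_val]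

lemma const_of_step (d : ZMod n → ZMod M) (h : ∀ i, d i = d (i - 1)) (i : ZMod n) :
    d i = d 0 := by
  obtain ⟨k, rfl⟩ := ZMod.natCast_rightInverse.surjective i
  induction k with
  | zero => simp
  | succ m ih =>
    have := h ((m + 1 : ℕ) : ZMod n)
    push_cast at this ⊢
    rw [this, add_sub_cancel_right, ih]

end Aux

/-- Anonymity core of the grades protocol: fixing the secrets `x` and the two
random values `γ = y 0`, `γ' = y (n-1)` observed by the first participant, the
map `Ψ` from the remaining randomness to the announcement vector
`a i = x i + y i - y (i-1)` (in `ZMod M`) is injective with image exactly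
`A = {a | Σᵢ a i = Σᵢ x i ∧ a 0 = x 0 + γ - γ'}`; hence `|A| = M ^ (n-2)` and
(choosing the remaining values uniformly at random) the announcement vector is
uniformly distributed over `A`, all fibers of `Ψ` over `A` having equal size. -/
theorem stmt14 (n M : ℕ) (hn : 3 ≤ n) (hM : 1 ≤ M) [NeZero n] [NeZero M]
    (x : ZMod n → ZMod M) (γ γ' : ZMod M) :
    let D := {y : ZMod n → ZMod M // y 0 = γ ∧ y ((n - 1 : ℕ) : ZMod n) = γ'}
    let Ψ : D → (ZMod n → ZMod M) := fun y i => x i + y.1 i - y.1 (i - 1)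
    let A : Set (ZMod n → ZMod M) :=
      {a | (∑ i : ZMod n, a i) = (∑ i : ZMod n, x i) ∧ a 0 = x 0 + γ - γ'}
    Function.Injective Ψ ∧
      Set.range Ψ = A ∧
      Nat.card A = M ^ (n - 2) ∧
      ∀ a₁ ∈ A, ∀ a₂ ∈ A,
        Nat.card {y : D // Ψ y = a₁} = Nat.card {y : D // Ψ y = a₂} := by
  intro D Ψ A
  have hc : ((n - 1 : ℕ) : ZMod n) = -1 := by
    have h1 : (1:ℕ) ≤ n := by omega
    push_cast [Nat.cast_sub h1]
    simp
  have hcne : ((n - 1 : ℕ) : ZMod n) ≠ 0 := by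
    intro h
    have := congrArg ZMod.val h
    rw [ZMod.val_cast_of_lt (by omega), ZMod.val_zero] at this
    omega
  -- Injectivity
  have hinj : Function.Injective Ψ := by
    intro y y' hyy
    have hstep : ∀ i, (fun i => y.1 i - y'.1 i) i = (fun i => y.1 i - y'.1 i) (i - 1) := by
      intro i
      have h := congrFun hyy i
      simp only [Ψ] at h
      show y.1 i - y'.1 i = y.1 (i - 1) - y'.1 (i - 1)
      linear_combination h
    have h0 : y.1 0 - y'.1 0 = 0 := by rw [y.2.1, y'.2.1, sub_self]
    exact Subtype.ext (funext fun i => sub_eq_zero.mp (by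
      have h := const_of_step _ hstep i
      rw [h, h0]))
  -- Range
  have hrange : Set.range Ψ = A := by
    ext a
    constructor
    · rintro ⟨y, rfl⟩
      constructor
      · have hsum : (∑ i : ZMod n, y.1 (i - 1)) = ∑ i : ZMod n, y.1 i :=
          Fintype.sum_equiv (Equiv.subRight (1 : ZMod n)) _ _ (fun i => rfl)
        simp only [Ψ, Finset.sum_sub_distrib, Finset.sum_add_distrib, hsum]
        ring
      · show x 0 + y.1 0 - y.1 (0 - 1) = x 0 + γ - γ'
        rw [y.2.1, zero_sub, ← hc, y.2.2]
    · rintro ⟨hsum, h0⟩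
      set g : ℕ → ZMod M := fun m => γ + ∑ k ∈ Finset.range m, (a ((k + 1 : ℕ) : ZMod n) - x ((k + 1 : ℕ) : ZMod n)) with hg
      have hkey : ∑ k ∈ Finset.range (n - 1), (a ((k + 1 : ℕ) : ZMod n) - x ((k + 1 : ℕ) : ZMod n)) = γ' - γ := by
        have htot : (∑ k ∈ Finset.range n, (a (k : ZMod n) - x (k : ZMod n))) = 0 := by
          have h := sum_zmod_eq (M := M) (fun i => a i - x i)
          rw [← h, Finset.sum_sub_distrib, hsum, sub_self]
        obtain ⟨m, rfl⟩ : ∃ m, n = m + 1 := ⟨n - 1, by omega⟩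
        rw [Finset.sum_range_succ'] at htot
        simp only [Nat.cast_zero] at htot
        have : a 0 - x 0 = γ - γ' := by rw [h0]; ring
        simp only [Nat.add_sub_cancel]
        rw [this] at htot
        linear_combination htot
      refine ⟨⟨fun i => g i.val, ?_, ?_⟩, ?_⟩
      · simp [hg]
      · show g (((n - 1 : ℕ) : ZMod n)).val = γ'
        rw [ZMod.val_cast_of_lt (by omega : n - 1 < n)]
        simp only [hg, hkey]; ring
      · funext i
        show x i + g i.val - g (i - 1).val = a i
        by_cases hi : i = 0
        · subst hi
          rw [zero_sub, ← hc, ZMod.val_cast_of_lt (by omega : n - 1 < n)]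
          simp only [hg, ZMod.val_zero, Finset.range_zero, Finset.sum_empty, add_zero, hkey, h0]
          ring
        · have hvne : i.val ≠ 0 := fun h => hi (by
            rw [← ZMod.natCast_zmod_val i, h, Nat.cast_zero])
          obtain ⟨m, hm⟩ : ∃ m, i.val = m + 1 := ⟨i.val - 1, by omega⟩
          have him : i = ((m + 1 : ℕ) : ZMod n) := by rw [← hm, ZMod.natCast_zmod_val]
          have hvi1 : (i - 1).val = m := by
            rw [him]
            push_cast
            rw [add_sub_cancel_right, ZMod.val_cast_of_lt (by
              have := ZMod.val_lt i; omega)]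
          rw [hm, hvi1]
          simp only [hg, Finset.sum_range_succ]
          rw [← him]
          ring
  -- Cardinality of D
  have hD : Nat.card D = M ^ (n - 2) := by
    let P : ZMod n → Prop := fun i => i = 0 ∨ i = ((n - 1 : ℕ) : ZMod n)
    have hdec : DecidablePred P := fun i => inferInstanceAs (Decidable (_ ∨ _))
    let e : D ≃ ({i : ZMod n // ¬ P i} → ZMod M) :=
      { toFun := fun y i => y.1 i.1
        invFun := fun f => ⟨fun i => if h0 : i = 0 then γ else
            if h1 : i = ((n - 1 : ℕ) : ZMod n) then γ' else f ⟨i, fun h => h.elim h0 h1⟩,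
          by simp, by simp [hcne]⟩
        left_inv := by
          rintro ⟨y, hy0, hy1⟩
          ext i
          by_cases h0 : i = 0
          · subst h0; simp [hy0]
          · by_cases h1 : i = ((n - 1 : ℕ) : ZMod n)
            · subst h1; simp [hy1, hcne]
            · simp [h0, h1]
        right_inv := by
          intro f
          ext ⟨i, hi⟩
          have h0 : i ≠ 0 := fun h => hi (Or.inl h)
          have h1 : i ≠ ((n - 1 : ℕ) : ZMod n) := fun h => hi (Or.inr h)
          simp [h0, h1] }
    rw [Nat.card_congr e, Nat.card_fun]
    have hcard : Nat.card {i : ZMod n // ¬ P i} = n - 2 := by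
      rw [Nat.card_eq_fintype_card, Fintype.card_subtype_compl]
      have : Fintype.card {i : ZMod n // P i} = 2 := by
        rw [Fintype.card_subtype]
        have : Finset.filter P Finset.univ = {0, ((n - 1 : ℕ) : ZMod n)} := by
          ext i; simp [P]
        rw [this, Finset.card_insert_of_notMem (by simp [Ne.symm hcne]), Finset.card_singleton]
      rw [this, ZMod.card]
    rw [hcard, Nat.card_eq_fintype_card, ZMod.card]
  -- Cardinality of A
  have hA : Nat.card A = M ^ (n - 2) := by
    rw [← hrange, ← hD]
    exact Nat.card_congr (Equiv.ofInjective Ψ hinj).symm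
  refine ⟨hinj, hrange, hA, ?_⟩
  -- Fibers
  have hfib : ∀ a ∈ A, Nat.card {y : D // Ψ y = a} = 1 := by
    intro a ha
    rw [← hrange] at ha
    obtain ⟨y, hy⟩ := ha
    have : Nonempty {y : D // Ψ y = a} := ⟨⟨y, hy⟩⟩
    have : Subsingleton {y : D // Ψ y = a} :=
      ⟨fun u v => Subtype.ext (hinj (u.2.trans v.2.symm))⟩
    rw [Nat.card_eq_one_iff_unique]
    exact ⟨‹_›, ‹_›⟩
  intro a₁ ha₁ a₂ ha₂
  rw [hfib a₁ ha₁, hfib a₂ ha₂]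
end
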